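/- arXiv:2107.03160 — 2 statements merged into one kernel-verified Lean document; each statement's English description precedes it below -/
import Mathlib

section
/- Let 𝒜 be an essentially small abelian category linear over a finite field 𝔽_q with finite Hom and Ext¹ spaces. For objects X, Y, Z of 𝒜, the Hall number F_{XY}^Z = |{L ⊆ Z : L ≅ Y, Z/L ≅ X}| satisfies the Riedtmann–Peng formula F_{XY}^Z = (|Ext¹(X,Y)_Z| / |Hom(X,Y)|) · (|Aut(Z)| / (|Aut(X)| |Aut(Y)|)), where Ext¹(X,Y)_Z ⊆ Ext¹(X,Y) is the subset of extension classes with middle term isomorphic to Z. -/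
open CategoryTheory Limits

universe v u

variable {A : Type u} [Category.{v} A] [Abelian A]

/-- A representative of a class in `Ext¹(X,Y)`: a short exact sequence `0 → Y → E → X → 0`. -/
structure ExtRep (A : Type u) [Category.{v} A] [Abelian A] (X Y : A) where
  E : A
  ι : Y ⟶ E
  π : E ⟶ X
  w : ι ≫ π = 0
  ex : (ShortComplex.mk ι π w).ShortExact

/-- Equivalence of short exact sequences: isomorphism of middle terms commuting with the
structure maps. -/
def extRepSetoid (A : Type u) [Category.{v} A] [Abelian A] (X Y : A) :
    Setoid (ExtRep A X Y) where
  r s t := ∃ e : s.E ≅ t.E, s.ι ≫ e.hom = t.ι ∧ e.hom ≫ t.π = s.π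
  iseqv := by
    constructor
    · intro s; exact ⟨Iso.refl _, by simp, by simp⟩
    · rintro s t ⟨e, h1, h2⟩
      exact ⟨e.symm, by rw [← h1]; simp, by rw [← h2]; simp⟩
    · rintro s t u ⟨e, h1, h2⟩ ⟨f, h3, h4⟩
      exact ⟨e.trans f, by simp [← h3, ← h1], by simp [← h2, ← h4]⟩

/-- The set `Ext¹(X,Y)_Z` of classes of short exact sequences `0 → Y → E → X → 0`
with middle term `E ≅ Z`. -/
def ExtWithMiddle (X Y Z : A) : Type _ :=
  Quotient (Setoid.comap (Subtype.val : {s : ExtRep A X Y // Nonempty (s.E ≅ Z)} → _)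
    (extRepSetoid A X Y))

/-- The Hall number `F_{XY}^Z = |{L ⊆ Z : L ≅ Y, Z/L ≅ X}|`. -/
noncomputable def hallNumber (X Y Z : A) : ℕ :=
  Nat.card {L : Subobject Z // Nonempty ((L : A) ≅ Y) ∧ Nonempty (cokernel L.arrow ≅ X)}

/-! A short exact sequence `0 → Y → Z → X → 0` with fixed middle term `Z` determines a class of
`Ext¹(X,Y)_Z` and a subobject counted by `F_{XY}^Z`. The fibres of the first map are the orbits
of `Aut Z`, whose stabilizers are the transvections `1 + ι ∘ f ∘ π` with `f ∈ Hom(X,Y)`; the fibres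
of the second are the orbits of the free action of `Aut Y × Aut X`. Counting the sequences in both ways gives
`F_{XY}^Z · |Aut Y| |Aut X| · |Hom(X,Y)| = |Ext¹(X,Y)_Z| · |Aut Z|`. -/

namespace MulAction

variable {G α β : Type*} [Group G] [MulAction G α]

theorem card_mul_eq_card_orbitRel_quotient_mul_card [Finite G] [Finite α] {n : ℕ}
    (hstab : ∀ a : α, Nat.card (stabilizer G a) = n) :
    Nat.card α * n = Nat.card (orbitRel.Quotient G α) * Nat.card G := by
  classical
  have : Fintype (orbitRel.Quotient G α) := Fintype.ofFinite _
  rw [Nat.card_congr (selfEquivSigmaOrbits G α), Nat.card_sigma, Finset.sum_mul,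
    Nat.card_eq_fintype_card (α := orbitRel.Quotient G α), ← Finset.card_univ, ← smul_eq_mul,
    ← Finset.sum_const]
  refine Finset.sum_congr rfl fun ω _ => ?_
  rw [← hstab ω.out, Nat.card_congr (orbitEquivQuotientStabilizer G ω.out)]
  exact (stabilizer G ω.out).index_mul_card

theorem card_orbitRel_quotient_eq_of_fibers {f : α → β} (hf : Function.Surjective f)
    (hfib : ∀ a b, f a = f b ↔ orbitRel G α a b) :
    Nat.card (orbitRel.Quotient G α) = Nat.card β := by
  have : orbitRel G α = Setoid.ker f := Setoid.ext fun a b => (hfib a b).symm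
  rw [orbitRel.Quotient, this]
  exact Nat.card_congr (Setoid.quotientKerEquivOfSurjective f hf)

end MulAction

instance CategoryTheory.Aut.finite (M : A) [Finite (M ⟶ M)] : Finite (Aut M) :=
  Finite.of_injective (fun g : Aut M => g.hom) fun _ _ => Aut.ext

def IsSES {Y E X : A} (ι : Y ⟶ E) (π : E ⟶ X) : Prop :=
  ∃ w : ι ≫ π = 0, (ShortComplex.mk ι π w).ShortExact

namespace IsSES

variable {Y E X Y' E' X' : A} {ι : Y ⟶ E} {π : E ⟶ X}

lemma w (h : IsSES ι π) : ι ≫ π = 0 := h.choose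

lemma shortExact (h : IsSES ι π) : (ShortComplex.mk ι π h.w).ShortExact := h.choose_spec

lemma mono (h : IsSES ι π) : Mono ι := h.shortExact.mono_f

lemma epi (h : IsSES ι π) : Epi π := h.shortExact.epi_g

lemma of_iso (h : IsSES ι π) (a : Y' ≅ Y) (e : E ≅ E') (b : X ≅ X') {ι' : Y' ⟶ E'}
    {π' : E' ⟶ X'} (hι : a.hom ≫ ι ≫ e.hom = ι') (hπ : e.inv ≫ π ≫ b.hom = π') :
    IsSES ι' π' := by
  subst hι hπ
  exact ⟨by simp [reassoc_of% h.w], ShortComplex.shortExact_of_iso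
    (ShortComplex.isoMk a.symm e b (by simp) (by simp)) h.shortExact⟩

lemma cokernel_π (ι : Y ⟶ E) [Mono ι] : IsSES ι (cokernel.π ι) :=
  ⟨cokernel.condition ι, .mk' (ShortComplex.exact_of_g_is_cokernel _ (cokernelIsCokernel ι))
    inferInstance inferInstance⟩

noncomputable def gIsCokernel (h : IsSES ι π) : IsColimit (CokernelCofork.ofπ π h.w) :=
  have := h.epi
  h.shortExact.exact.gIsCokernel

noncomputable def cokernelIso (h : IsSES ι π) : cokernel ι ≅ X :=
  IsColimit.coconePointUniqueUpToIso (cokernelIsCokernel ι) h.gIsCokernel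

lemma exists_iso_comp_eq {π' : E ⟶ X'} (h : IsSES ι π) (h' : IsSES ι π') :
    ∃ b : X ≅ X', π ≫ b.hom = π' :=
  ⟨IsColimit.coconePointUniqueUpToIso h.gIsCokernel h'.gIsCokernel,
    IsColimit.comp_coconePointUniqueUpToIso_hom h.gIsCokernel h'.gIsCokernel .one⟩

lemma exists_eq_id_add (h : IsSES ι π) {g : E ⟶ E} (hι : ι ≫ g = ι) (hπ : g ≫ π = π) :
    ∃ f : X ⟶ Y, 𝟙 E + π ≫ f ≫ ι = g := by
  have := h.mono
  have := h.epi
  have hS := h.shortExact.exact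
  let k : X ⟶ E := hS.desc (g - 𝟙 E) (by simp [Preadditive.comp_sub, hι])
  have hk : π ≫ k = g - 𝟙 E := hS.g_desc _ _
  have hkπ : k ≫ π = 0 := by
    rw [← cancel_epi π, reassoc_of% hk]
    simp [Preadditive.sub_comp, hπ]
  refine ⟨hS.lift k hkπ, ?_⟩
  rw [hS.lift_f, hk]
  abel

end IsSES

@[simps]
def transvection {Y E X : A} {ι : Y ⟶ E} {π : E ⟶ X} (w : ι ≫ π = 0) (f : X ⟶ Y) : Aut E where
  hom := 𝟙 E + π ≫ f ≫ ι
  inv := 𝟙 E - π ≫ f ≫ ι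
  hom_inv_id := by simp [Preadditive.comp_sub, Preadditive.add_comp, reassoc_of% w]
  inv_hom_id := by simp [Preadditive.comp_add, Preadditive.sub_comp, reassoc_of% w]

abbrev HallSubobject (X Y Z : A) : Type _ :=
  {L : Subobject Z // Nonempty ((L : A) ≅ Y) ∧ Nonempty (cokernel L.arrow ≅ X)}

@[ext]
structure SES (X Y Z : A) where
  ι : Y ⟶ Z
  π : Z ⟶ X
  isSES : IsSES ι π

namespace SES

variable {X Y Z : A}

instance (p : SES X Y Z) : Mono p.ι := p.isSES.mono

instance (p : SES X Y Z) : Epi p.π := p.isSES.epi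

instance [Finite (Y ⟶ Z)] [Finite (Z ⟶ X)] : Finite (SES X Y Z) :=
  Finite.of_injective (fun p : SES X Y Z => (p.ι, p.π)) fun p q h => by
    simp only [Prod.mk.injEq] at h
    exact SES.ext h.1 h.2

instance : MulAction (Aut Z) (SES X Y Z) where
  smul g p := ⟨p.ι ≫ g.hom, g.inv ≫ p.π, p.isSES.of_iso (Iso.refl Y) g (Iso.refl X)
    (by simp) (by simp)⟩
  one_smul p := SES.ext (Category.comp_id _) (Category.id_comp _)
  mul_smul _ _ _ := SES.ext (Category.assoc _ _ _).symm (Category.assoc _ _ _)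

@[simp] lemma autMiddle_smul_ι (g : Aut Z) (p : SES X Y Z) : (g • p).ι = p.ι ≫ g.hom := rfl

@[simp] lemma autMiddle_smul_π (g : Aut Z) (p : SES X Y Z) : (g • p).π = g.inv ≫ p.π := rfl

instance : MulAction (Aut Y × Aut X) (SES X Y Z) where
  smul g p := ⟨g.1.inv ≫ p.ι, p.π ≫ g.2.hom, p.isSES.of_iso (g.1 : Y ≅ Y).symm (Iso.refl Z) g.2
    (by rw [Iso.refl_hom, Category.comp_id]; rfl) (by simp)⟩
  one_smul p := SES.ext (Category.id_comp _) (Category.comp_id _)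
  mul_smul _ _ _ := SES.ext (Category.assoc _ _ _) (Category.assoc _ _ _).symm

@[simp] lemma autEnds_smul_ι (g : Aut Y × Aut X) (p : SES X Y Z) : (g • p).ι = g.1.inv ≫ p.ι :=
  rfl

@[simp] lemma autEnds_smul_π (g : Aut Y × Aut X) (p : SES X Y Z) : (g • p).π = p.π ≫ g.2.hom :=
  rfl

open MulAction

lemma mem_stabilizer_autMiddle_iff {g : Aut Z} {p : SES X Y Z} :
    g ∈ stabilizer (Aut Z) p ↔ p.ι ≫ g.hom = p.ι ∧ g.hom ≫ p.π = p.π := by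
  rw [mem_stabilizer_iff, SES.ext_iff, autMiddle_smul_ι, autMiddle_smul_π,
    Iso.inv_comp_eq (α := g), eq_comm (a := p.π)]

lemma card_stabilizer_autMiddle (p : SES X Y Z) :
    Nat.card (stabilizer (Aut Z) p) = Nat.card (X ⟶ Y) := by
  have hw := p.isSES.w
  refine (Nat.card_congr (Equiv.ofBijective (fun f => ⟨transvection hw f,
    mem_stabilizer_autMiddle_iff.2 ⟨by simp [Preadditive.comp_add, reassoc_of% hw],
      by simp [Preadditive.add_comp, hw]⟩⟩) ⟨fun f f' h => ?_, fun ⟨g, hg⟩ => ?_⟩)).symm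
  · have h := congrArg (fun g : stabilizer (Aut Z) p => (g : Aut Z).hom) h
    simpa only [transvection_hom, add_right_inj, cancel_epi, cancel_mono] using h
  · obtain ⟨f, hf⟩ := p.isSES.exists_eq_id_add (mem_stabilizer_autMiddle_iff.1 hg).1
      (mem_stabilizer_autMiddle_iff.1 hg).2
    exact ⟨f, Subtype.ext (Aut.ext hf)⟩

lemma stabilizer_autEnds_eq_bot (p : SES X Y Z) : stabilizer (Aut Y × Aut X) p = ⊥ := by
  ext ⟨a, b⟩
  simp only [mem_stabilizer_iff, SES.ext_iff, autEnds_smul_ι, autEnds_smul_π, Subgroup.mem_bot,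
    Prod.mk_eq_one]
  refine ⟨fun ⟨ha, hb⟩ => ⟨Aut.ext ?_, Aut.ext ?_⟩,
    by rintro ⟨rfl, rfl⟩; exact ⟨Category.id_comp _, Category.comp_id _⟩⟩
  · have hinv : a.inv = 𝟙 Y := (cancel_mono p.ι).1 (ha.trans (Category.id_comp _).symm)
    calc a.hom = a.hom ≫ a.inv := by rw [hinv, Category.comp_id]
      _ = 𝟙 Y := a.hom_inv_id
  · exact (cancel_epi p.π).1 (hb.trans (Category.comp_id _).symm)

def toExt (p : SES X Y Z) : ExtWithMiddle X Y Z :=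
  Quotient.mk _ ⟨⟨Z, p.ι, p.π, p.isSES.w, p.isSES.shortExact⟩, ⟨Iso.refl Z⟩⟩

lemma toExt_surjective : Function.Surjective (toExt (X := X) (Y := Y) (Z := Z)) := by
  rintro ⟨⟨s, ⟨e⟩⟩⟩
  exact ⟨⟨s.ι ≫ e.hom, e.inv ≫ s.π, IsSES.of_iso ⟨s.w, s.ex⟩ (Iso.refl Y) e (Iso.refl X)
    (by simp) (by simp)⟩, Quotient.sound ⟨e.symm, by simp, by simp⟩⟩

lemma toExt_eq_toExt_iff (p q : SES X Y Z) :
    toExt p = toExt q ↔ orbitRel (Aut Z) (SES X Y Z) p q := by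
  refine Quotient.eq.trans ?_
  change (∃ e : Z ≅ Z, p.ι ≫ e.hom = q.ι ∧ e.hom ≫ q.π = p.π) ↔ _
  refine ⟨fun ⟨e, hι, hπ⟩ => ⟨e.symm, SES.ext ?_ hπ⟩,
    fun ⟨g, hg⟩ => ⟨(g : Z ≅ Z).symm, ?_, by rw [← hg]; rfl⟩⟩
  · change q.ι ≫ e.inv = p.ι
    rw [← hι, Category.assoc, e.hom_inv_id, Category.comp_id]
  · change p.ι ≫ g.inv = q.ι
    rw [← hg, autMiddle_smul_ι, Category.assoc, g.hom_inv_id, Category.comp_id]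

noncomputable def toHallSubobject (p : SES X Y Z) : HallSubobject X Y Z :=
  ⟨Subobject.mk p.ι, ⟨Subobject.underlyingIso p.ι⟩,
    ⟨(p.isSES.of_iso (π' := p.π) (Subobject.underlyingIso p.ι) (Iso.refl Z) (Iso.refl X)
      (by simp) (by simp)).cokernelIso⟩⟩

lemma toHallSubobject_surjective :
    Function.Surjective (toHallSubobject (X := X) (Y := Y) (Z := Z)) := by
  rintro ⟨L, ⟨e⟩, ⟨f⟩⟩
  refine ⟨⟨e.inv ≫ L.arrow, cokernel.π L.arrow ≫ f.hom,
    (IsSES.cokernel_π L.arrow).of_iso e.symm (Iso.refl Z) f (by simp) (by simp)⟩, ?_⟩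
  exact Subtype.ext (Subobject.mk_eq_of_comm _ e.symm (by simp))

lemma toHallSubobject_eq_toHallSubobject_iff (p q : SES X Y Z) :
    toHallSubobject p = toHallSubobject q ↔ orbitRel (Aut Y × Aut X) (SES X Y Z) p q := by
  rw [Subtype.ext_iff]
  change Subobject.mk p.ι = Subobject.mk q.ι ↔ _
  refine ⟨fun h => ?_, fun ⟨g, hg⟩ => ?_⟩
  · let a := Subobject.isoOfMkEqMk p.ι q.ι h
    have ha : a.hom ≫ q.ι = p.ι := Subobject.ofMkLEMk_comp h.le
    obtain ⟨b, hb⟩ := (q.isSES.of_iso (π' := q.π) a (Iso.refl Z) (Iso.refl X) (by simp [ha])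
      (by simp)).exists_iso_comp_eq p.isSES
    exact ⟨((a.symm : Y ≅ Y), b), SES.ext ha hb⟩
  · rw [← hg]
    exact Subobject.mk_eq_mk_of_comm _ _ (g.1 : Y ≅ Y).symm rfl

variable [Finite (Y ⟶ Z)] [Finite (Z ⟶ X)]

theorem card_mul_card_hom [Finite (Z ⟶ Z)] :
    Nat.card (SES X Y Z) * Nat.card (X ⟶ Y) =
      Nat.card (ExtWithMiddle X Y Z) * Nat.card (Aut Z) := by
  rw [card_mul_eq_card_orbitRel_quotient_mul_card card_stabilizer_autMiddle,
    card_orbitRel_quotient_eq_of_fibers toExt_surjective toExt_eq_toExt_iff]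

theorem card_eq_hallNumber_mul [Finite (Y ⟶ Y)] [Finite (X ⟶ X)] :
    Nat.card (SES X Y Z) = hallNumber X Y Z * (Nat.card (Aut Y) * Nat.card (Aut X)) := by
  have h := card_mul_eq_card_orbitRel_quotient_mul_card (G := Aut Y × Aut X) (α := SES X Y Z)
    (n := 1) fun p => by rw [stabilizer_autEnds_eq_bot, Subgroup.card_bot]
  rwa [mul_one, card_orbitRel_quotient_eq_of_fibers toHallSubobject_surjective
    toHallSubobject_eq_toHallSubobject_iff, Nat.card_prod] at h

end SES

theorem stmt7_general (hfin : ∀ X Y : A, Finite (X ⟶ Y)) (X Y Z : A) :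
    (hallNumber X Y Z : ℚ)
      = ((Nat.card (ExtWithMiddle X Y Z) : ℚ) / (Nat.card (X ⟶ Y) : ℚ)) *
        ((Nat.card (Aut Z) : ℚ) / ((Nat.card (Aut X) : ℚ) * (Nat.card (Aut Y) : ℚ))) := by
  have hHom : (Nat.card (X ⟶ Y) : ℚ) ≠ 0 := Nat.cast_ne_zero.2 Nat.card_pos.ne'
  have hAutX : (Nat.card (Aut X) : ℚ) ≠ 0 := Nat.cast_ne_zero.2 Nat.card_pos.ne'
  have hAutY : (Nat.card (Aut Y) : ℚ) ≠ 0 := Nat.cast_ne_zero.2 Nat.card_pos.ne'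
  have key := congrArg (Nat.cast : ℕ → ℚ) (SES.card_mul_card_hom (X := X) (Y := Y) (Z := Z))
  rw [SES.card_eq_hallNumber_mul] at key
  push_cast at key
  field_simp
  linear_combination key

/-- The Riedtmann–Peng formula: for an `𝔽_q`-linear abelian category with finite Hom spaces,
`F_{XY}^Z = (|Ext¹(X,Y)_Z| / |Hom(X,Y)|) · (|Aut Z| / (|Aut X| |Aut Y|))`. -/
theorem stmt7 (Fq : Type*) [Field Fq] [Finite Fq] [Linear Fq A]
    (hfin : ∀ X Y : A, Finite (X ⟶ Y)) (X Y Z : A) :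
    (hallNumber X Y Z : ℚ)
      = ((Nat.card (ExtWithMiddle X Y Z) : ℚ) / (Nat.card (X ⟶ Y) : ℚ)) *
        ((Nat.card (Aut Z) : ℚ) / ((Nat.card (Aut X) : ℚ) * (Nat.card (Aut Y) : ℚ))) :=
  stmt7_general hfin X Y Z
end

section
/- Let 𝒜 be a hereditary abelian 𝔽_q-linear category with finite Hom and Ext¹ spaces. For any objects A, B of 𝒜, in C_{ℤ₂}(𝒜) the Euler forms satisfy ⟨[C_A], [K_B]⟩ = ⟨A, B⟩_𝒜 and ⟨[K_B], [C_A]⟩ = 0, where C_A = (0 ⇄ A) is the stalk complex with A in degree 1 and zero differentials, and K_B = (B ⇄ B) with d⁰ = id, d¹ = 0 is the acyclic complex associated to B, and ⟨[M],[N]⟩ = dim Hom_{C_{ℤ₂}(𝒜)}(M,N) − dim Ext¹_{C_{ℤ₂}(𝒜)}(M,N). -/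
open CategoryTheory Limits ZeroObject

universe v u

/-- The category `C_{ℤ₂}(𝒜)` of `ℤ₂`-graded complexes over `𝒜`. -/
abbrev C2 (A : Type u) [Category.{v} A] [Abelian A] :=
  HomologicalComplex A (ComplexShape.up' (1 : ZMod 2))

variable {A : Type u} [Category.{v} A] [Abelian A]

/-- The stalk complex `C_X = (0 ⇄ X)` with `X` in degree `1` and zero differentials. -/
noncomputable def stalkC (X : A) : C2 A where
  X i := if i = 1 then X else 0
  d _ _ := 0
  shape := by intros; rfl
  d_comp_d' := by intros; simp

/-- The acyclic complex `K_X = (X ⇄ X)` with `d⁰ = id`, `d¹ = 0`. -/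
noncomputable def acyclicK (X : A) : C2 A where
  X _ := X
  d i j := if i = 0 ∧ j = 1 then 𝟙 X else 0
  shape := by
    intro i j h
    try dsimp
    rw [if_neg]
    rintro ⟨rfl, rfl⟩
    exact h (by decide)
  d_comp_d' := by
    intro i j k hij hjk
    try dsimp
    by_cases h1 : i = 0 ∧ j = 1
    · rw [if_pos h1, if_neg (by rintro ⟨rfl, -⟩; exact absurd h1.2 (by decide)), comp_zero]
    · rw [if_neg h1, zero_comp]

/-- The Euler form `⟨M,N⟩ = dim Hom(M,N) − dim Ext¹(M,N)` in `C_{ℤ₂}(𝒜)`,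
dimensions taken over `Fq`. -/
noncomputable def eulerC2 (Fq : Type*) [Field Fq] [Linear Fq A]
    [EnoughProjectives (C2 A)] (M N : C2 A) : ℤ :=
  (Module.finrank Fq (M ⟶ N) : ℤ) -
    (Module.finrank Fq (((Ext Fq (C2 A) 1).obj (Opposite.op M)).obj N) : ℤ)

/-- The Euler form `⟨A,B⟩ = dim Hom(A,B) − dim Ext¹(A,B)` in `𝒜`. -/
noncomputable def eulerA (Fq : Type*) [Field Fq] [Linear Fq A]
    [EnoughProjectives A] (X Y : A) : ℤ :=
  (Module.finrank Fq (X ⟶ Y) : ℤ) -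
    (Module.finrank Fq (((Ext Fq A 1).obj (Opposite.op X)).obj Y) : ℤ)

/-!
`K_B` is left adjoint to evaluation in degree `0` and right adjoint to evaluation in degree `1`.
All functors involved are exact, and each left adjoint preserves projectives because its right
adjoint preserves epimorphisms; so the left adjoint carries projective resolutions to projective
resolutions and the adjunction identifies the Hom complexes. This gives, in every degree,
`Ext(M, K_B) ≅ Ext(M¹, B)` and `Ext(K_B, N) ≅ Ext(B, N⁰)`. For `M = N = C_A` we have `M¹ = A` and
`N⁰ = 0`, whence both identities of Euler forms.
-/

universe w

instance HomologicalComplex.eval_linear {R : Type*} [Semiring R] {V : Type*} [Category V]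
    [Preadditive V] [Linear R V] {ι : Type*} (c : ComplexShape ι) (i : ι) :
    (HomologicalComplex.eval V c i).Linear R where

namespace CategoryTheory

def Adjunction.homLinearEquiv {R : Type*} [Ring R] {C D : Type*} [Category C] [Category D]
    [Preadditive C] [Preadditive D] [Linear R C] [Linear R D] {F : C ⥤ D} {G : D ⥤ C}
    [G.Additive] [G.Linear R] (adj : F ⊣ G) (X : C) (Y : D) :
    (F.obj X ⟶ Y) ≃ₗ[R] (X ⟶ G.obj Y) where
  toEquiv := adj.homEquiv X Y
  map_add' := by simp [Adjunction.homEquiv_unit]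
  map_smul' := by simp [Adjunction.homEquiv_unit]

variable (R : Type*) [Ring R] {C D : Type*} [Category.{w} C] [Category.{w} D]
  [Abelian C] [Abelian D] [Linear R C] [Linear R D]

lemma isZero_Ext_of_isZero_right [EnoughProjectives C] (n : ℕ) (X : C) {Y : C} (hY : IsZero Y) :
    IsZero (((Ext R C n).obj (Opposite.op X)).obj Y) := by
  refine IsZero.of_iso ?_ ((projectiveResolution X).isoExt n Y)
  rw [← HomologicalComplex.exactAt_iff_isZero_homology, HomologicalComplex.exactAt_iff]
  refine ShortComplex.exact_of_isZero_X₂ _ ?_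
  exact @ModuleCat.isZero_of_subsingleton _ _ _ ⟨fun f g => hY.eq_of_tgt f g⟩

variable {F : C ⥤ D} {G : D ⥤ C} [F.Additive] [G.Additive] [G.Linear R]

noncomputable def Adjunction.linearYonedaObjMapIso (adj : F ⊣ G) (P : ChainComplex C ℕ) (Y : D) :
    ChainComplex.linearYonedaObj ((F.mapHomologicalComplex _).obj P) R Y ≅
      P.linearYonedaObj R (G.obj Y) :=
  HomologicalComplex.Hom.isoOfComponents
    (fun k => (adj.homLinearEquiv (P.X k) Y).toModuleIso)
    (fun i j _ => by
      ext f
      exact (adj.homEquiv_naturality_left _ f).symm)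

noncomputable def Adjunction.extIso [EnoughProjectives C] [EnoughProjectives D]
    [F.PreservesHomology] [G.PreservesEpimorphisms] (adj : F ⊣ G) (n : ℕ) (X : C) (Y : D) :
    ((Ext R D n).obj (Opposite.op (F.obj X))).obj Y ≅
      ((Ext R C n).obj (Opposite.op X)).obj (G.obj Y) :=
  have := F.preservesProjectiveObjects_of_adjunction_of_preservesEpimorphisms adj
  let P := projectiveResolution X
  (F.mapProjectiveResolution P).isoExt n Y ≪≫
    (HomologicalComplex.homologyFunctor _ _ n).mapIso (adj.linearYonedaObjMapIso R P.complex Y) ≪≫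
    (P.isoExt n (G.obj Y)).symm

end CategoryTheory

namespace C2

@[ext]
lemma hom_ext {M N : C2 A} {φ ψ : M ⟶ N} (h₀ : φ.f 0 = ψ.f 0) (h₁ : φ.f 1 = ψ.f 1) : φ = ψ := by
  ext i
  fin_cases i
  exacts [h₀, h₁]

-- `ZMod 2` is `Fin 2` by definition, so `Fin.cases` computes: `(homMk ..).f 0 = f₀` is `rfl`.
def homMk {M N : C2 A} (f₀ : M.X 0 ⟶ N.X 0) (f₁ : M.X 1 ⟶ N.X 1)
    (h₀₁ : f₀ ≫ N.d 0 1 = M.d 0 1 ≫ f₁) (h₁₀ : f₁ ≫ N.d 1 0 = M.d 1 0 ≫ f₀) : M ⟶ N where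
  f i := Fin.cases f₀ (fun j => Fin.cases f₁ finZeroElim j) i
  comm' := by
    rintro i j (rfl : i + 1 = j)
    fin_cases i
    exacts [h₀₁, h₁₀]

@[simp] lemma acyclicK_X (X : A) (i : ZMod 2) : (acyclicK X).X i = X := rfl

@[simp] lemma acyclicK_d_zero_one (X : A) : (acyclicK X).d 0 1 = 𝟙 X := rfl

@[simp] lemma acyclicK_d_one_zero (X : A) : (acyclicK X).d 1 0 = 0 := rfl

noncomputable def acyclicKFunctor : A ⥤ C2 A where
  obj := acyclicK
  map f :=
    { f := fun _ => f
      comm' := by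
        rintro i j -
        dsimp [acyclicK]
        split_ifs <;> simp }

noncomputable def acyclicKAdjEvalZero :
    acyclicKFunctor ⊣ HomologicalComplex.eval A (ComplexShape.up' (1 : ZMod 2)) 0 :=
  Adjunction.mkOfHomEquiv
    { homEquiv Z M :=
        { toFun φ := φ.f 0
          invFun (g : Z ⟶ M.X 0) := homMk (M := acyclicK Z) g (g ≫ M.d 0 1)
            (by simp) (by simp; exact zero_comp.symm)
          left_inv φ := by
            ext
            · rfl
            · exact (φ.comm 0 1).trans (Category.id_comp _)
          right_inv g := rfl }
      homEquiv_naturality_left_symm f g := by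
        ext
        · rfl
        · exact Category.assoc _ _ _
      homEquiv_naturality_right f g := rfl }

noncomputable def evalOneAdjAcyclicK :
    HomologicalComplex.eval A (ComplexShape.up' (1 : ZMod 2)) 1 ⊣ acyclicKFunctor :=
  Adjunction.mkOfHomEquiv
    { homEquiv M Y :=
        { toFun (g : M.X 1 ⟶ Y) := homMk (N := acyclicK Y) (M.d 0 1 ≫ g) g
            (by simp) (by simp; exact comp_zero)
          invFun φ := φ.f 1
          left_inv g := rfl
          right_inv φ := by
            ext
            · exact ((Category.comp_id _).symm.trans (φ.comm 0 1)).symm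
            · rfl }
      homEquiv_naturality_left_symm f g := rfl
      homEquiv_naturality_right f g := by
        ext
        · exact (Category.assoc _ _ _).symm
        · rfl }

instance : (acyclicKFunctor (A := A)).Additive where
  map_add := by intros; ext <;> rfl

instance {R : Type*} [Semiring R] [Linear R A] : (acyclicKFunctor (A := A)).Linear R where
  map_smul := by intros; ext <;> rfl

instance : (acyclicKFunctor (A := A)).IsLeftAdjoint := acyclicKAdjEvalZero.isLeftAdjoint

instance : (acyclicKFunctor (A := A)).IsRightAdjoint := evalOneAdjAcyclicK.isRightAdjoint

end C2

open C2 Module in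
theorem stmt14_general (Fq : Type*) [Field Fq] [Linear Fq A]
    [EnoughProjectives A] [EnoughProjectives (C2 A)]
    (X Y : A) :
    eulerC2 Fq (stalkC X) (acyclicK Y) = eulerA Fq X Y ∧
    eulerC2 Fq (acyclicK Y) (stalkC X) = 0 := by
  have hom₁ : finrank Fq (X ⟶ Y) = finrank Fq (stalkC X ⟶ acyclicK Y) :=
    (evalOneAdjAcyclicK.homLinearEquiv (stalkC X) Y).finrank_eq
  have ext₁ : finrank Fq (((Ext Fq A 1).obj (.op X)).obj Y) =
      finrank Fq (((Ext Fq (C2 A) 1).obj (.op (stalkC X))).obj (acyclicK Y)) :=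
    (evalOneAdjAcyclicK.extIso Fq 1 (stalkC X) Y).toLinearEquiv.finrank_eq
  have hom₂ : Subsingleton (acyclicK Y ⟶ stalkC X) :=
    (acyclicKAdjEvalZero.homEquiv Y (stalkC X)).subsingleton_congr.mpr
      ⟨(isZero_zero A).eq_of_tgt⟩
  have ext₂ : IsZero (((Ext Fq (C2 A) 1).obj (.op (acyclicK Y))).obj (stalkC X)) :=
    (isZero_Ext_of_isZero_right Fq 1 Y (isZero_zero A)).of_iso
      (acyclicKAdjEvalZero.extIso Fq 1 Y (stalkC X))
  have := ModuleCat.subsingleton_of_isZero ext₂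
  refine ⟨by rw [eulerC2, eulerA, hom₁, ext₁], ?_⟩
  rw [eulerC2, finrank_zero_of_subsingleton, finrank_zero_of_subsingleton, Nat.cast_zero, sub_zero]

/-- For a hereditary abelian `𝔽_q`-linear category `𝒜` with finite Hom and `Ext¹` spaces:
`⟨[C_A], [K_B]⟩ = ⟨A,B⟩_𝒜` and `⟨[K_B], [C_A]⟩ = 0`. -/
theorem stmt14 (Fq : Type*) [Field Fq] [Finite Fq] [Linear Fq A]
    [EnoughProjectives A] [EnoughProjectives (C2 A)]
    (hfin : ∀ X Y : A, Finite (X ⟶ Y))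
    (hered : ∀ X Y : A, Subsingleton (((Ext Fq A 2).obj (Opposite.op X)).obj Y))
    (X Y : A) :
    eulerC2 Fq (stalkC X) (acyclicK Y) = eulerA Fq X Y ∧
    eulerC2 Fq (acyclicK Y) (stalkC X) = 0 :=
  stmt14_general Fq X Y
end
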